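/- arXiv:2404.19344 — 6 statements merged into one kernel-verified Lean document; each statement's English description precedes it below -/
import Mathlib

section
/- Let T ≥ 2 be an integer, let 1 ≤ s ≤ r < e ≤ T be integers, and let f ∈ ℝ^T have exactly one change-point r on [s,e] with values μ₁, μ₂ and jump magnitude Δ. Then for every integer b with s ≤ b < e, ‖ψ^b_{s,e}·⟨f, ψ^b_{s,e}⟩ − ψ^r_{s,e}·⟨f, ψ^r_{s,e}⟩‖₂² = (f̃^r_{s,e})² − (f̃^b_{s,e})². -/
open Real Finset

/-- CUSUM statistic of `x` at `b` over the interval `[s, e]`. -/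
noncomputable def cusum (x : ℕ → ℝ) (s b e : ℕ) : ℝ :=
  Real.sqrt (((e : ℝ) - b) / (((e : ℝ) - s + 1) * ((b : ℝ) - s + 1))) *
      (∑ t ∈ Finset.Icc s b, x t) -
    Real.sqrt (((b : ℝ) - s + 1) / (((e : ℝ) - s + 1) * ((e : ℝ) - b))) *
      (∑ t ∈ Finset.Icc (b + 1) e, x t)

/-- The contrast vector `ψ^b_{s,e}`, given coordinatewise as a function of `t`. -/
noncomputable def psi (s b e t : ℕ) : ℝ :=
  if s ≤ t ∧ t ≤ b then
    Real.sqrt (((e : ℝ) - b) / (((e : ℝ) - s + 1) * ((b : ℝ) - s + 1)))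
  else if b + 1 ≤ t ∧ t ≤ e then
    -Real.sqrt (((b : ℝ) - s + 1) / (((e : ℝ) - s + 1) * ((e : ℝ) - b)))
  else 0

/-- Euclidean inner product on `ℝ^T`, with coordinates indexed by `1, …, T`. -/
noncomputable def innerT (T : ℕ) (x y : ℕ → ℝ) : ℝ := ∑ t ∈ Finset.Icc 1 T, x t * y t

/-- Squared Euclidean norm on `ℝ^T`, with coordinates indexed by `1, …, T`. -/
noncomputable def normSqT (T : ℕ) (x : ℕ → ℝ) : ℝ := ∑ t ∈ Finset.Icc 1 T, (x t) ^ 2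

/-!
On `[s, e]` the signal `f` takes one value left of `r` and another right of it, and so does
`ψ^r_{s,e}`; hence `f = m + k ψ^r_{s,e}` there. Every contrast vector `ψ^b_{s,e}` is a unit vector
orthogonal to constants, so `⟨f, ψ^b⟩ = k ⟨ψ^r, ψ^b⟩` and `⟨f, ψ^r⟩ = k`. Expanding the square,
`‖ψ^b⟨f,ψ^b⟩ − ψ^r⟨f,ψ^r⟩‖² = ⟨f,ψ^b⟩² + ⟨f,ψ^r⟩² − 2⟨f,ψ^b⟩⟨f,ψ^r⟩⟨ψ^r,ψ^b⟩`, and the cross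
term equals `2⟨f,ψ^b⟩²`.
-/

lemma psi_eq_left {s b e t : ℕ} (hst : s ≤ t) (htb : t ≤ b) :
    psi s b e t = √(((e : ℝ) - b) / (((e : ℝ) - s + 1) * ((b : ℝ) - s + 1))) := by
  rw [psi, if_pos ⟨hst, htb⟩]

lemma psi_eq_right {s b e t : ℕ} (hbt : b < t) (hte : t ≤ e) :
    psi s b e t = -√(((b : ℝ) - s + 1) / (((e : ℝ) - s + 1) * ((e : ℝ) - b))) := by
  rw [psi, if_neg (by omega), if_pos (by omega)]

lemma psi_eq_zero {s b e t : ℕ} (hsb : s ≤ b) (hbe : b ≤ e) (ht : t ∉ Icc s e) :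
    psi s b e t = 0 := by
  rw [mem_Icc] at ht
  rw [psi, if_neg (by omega), if_neg (by omega)]

lemma sum_Icc_eq_add {s u e : ℕ} (hsu : s ≤ u) (hue : u ≤ e) (g : ℕ → ℝ) :
    ∑ t ∈ Icc s e, g t = ∑ t ∈ Icc s u, g t + ∑ t ∈ Icc (u + 1) e, g t := by
  rw [← sum_union (disjoint_left.mpr fun t h h' => by simp only [mem_Icc] at h h'; omega)]
  congr 1
  ext t
  simp only [mem_Icc, mem_union]
  omega

lemma sum_Icc_eq_of_eqOn_const {u v : ℕ} (huv : u ≤ v + 1) {g : ℕ → ℝ} {c : ℝ}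
    (hg : ∀ t ∈ Icc u v, g t = c) : ∑ t ∈ Icc u v, g t = ((v : ℝ) - u + 1) * c := by
  rw [sum_congr rfl hg, sum_const, Nat.card_Icc, nsmul_eq_mul,
    Nat.cast_sub huv, Nat.cast_add, Nat.cast_one]
  ring

/-- Both sides equal `√(p q / L)`. -/
lemma mul_sqrt_div_eq_mul_sqrt_div {p q L : ℝ} (hp : 0 < p) (hq : 0 < q) (hL : p + q = L) :
    p * √(q / (L * p)) = q * √(p / (L * q)) := by
  have hL : 0 < L := hL ▸ add_pos hp hq
  rw [← sqrt_sq hp.le, ← sqrt_sq hq.le, ← sqrt_mul (sq_nonneg p), ← sqrt_mul (sq_nonneg q),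
    sqrt_sq hp.le, sqrt_sq hq.le]
  congr 1
  field_simp

lemma mul_sq_sqrt_div_add_mul_sq_sqrt_div {p q L : ℝ} (hp : 0 < p) (hq : 0 < q)
    (hL : p + q = L) : p * √(q / (L * p)) ^ 2 + q * √(p / (L * q)) ^ 2 = 1 := by
  have hL : 0 < L := hL ▸ add_pos hp hq
  rw [sq_sqrt (by positivity), sq_sqrt (by positivity)]
  field_simp
  linarith

section Cusum

variable {s b e : ℕ}

lemma innerT_psi {T : ℕ} (hs : 1 ≤ s) (hsb : s ≤ b) (hbe : b < e) (heT : e ≤ T)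
    (x : ℕ → ℝ) : innerT T x (psi s b e) = cusum x s b e := by
  have hsupp : ∀ t ∈ Icc 1 T, t ∉ Icc s e → x t * psi s b e t = 0 := fun t _ ht => by
    rw [psi_eq_zero hsb hbe.le ht, mul_zero]
  have hleft : ∑ t ∈ Icc s b, x t * psi s b e t = (∑ t ∈ Icc s b, x t) *
      √(((e : ℝ) - b) / (((e : ℝ) - s + 1) * ((b : ℝ) - s + 1))) := by
    rw [sum_mul]
    exact sum_congr rfl fun t ht => by rw [psi_eq_left (mem_Icc.1 ht).1 (mem_Icc.1 ht).2]
  have hright : ∑ t ∈ Icc (b + 1) e, x t * psi s b e t = (∑ t ∈ Icc (b + 1) e, x t) *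
      -√(((b : ℝ) - s + 1) / (((e : ℝ) - s + 1) * ((e : ℝ) - b))) := by
    rw [sum_mul]
    exact sum_congr rfl fun t ht => by rw [psi_eq_right (mem_Icc.1 ht).1 (mem_Icc.1 ht).2]
  rw [innerT, ← sum_subset (Icc_subset_Icc hs heT) hsupp, sum_Icc_eq_add hsb hbe.le, hleft,
    hright, cusum]
  ring

/-- The CUSUM statistic kills constants, so it only sees the `k y` part of `m + k y`. -/
lemma cusum_eq_mul_of_eqOn_affine (hsb : s ≤ b) (hbe : b < e) {x y : ℕ → ℝ} {m k : ℝ}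
    (hx : ∀ t ∈ Icc s e, x t = m + k * y t) : cusum x s b e = k * cusum y s b e := by
  have hsplit : ∀ u v, s ≤ u → v ≤ e → ∑ t ∈ Icc u v, x t =
      ∑ t ∈ Icc u v, (m + k * y t) := fun u v hu hv =>
    sum_congr rfl fun t ht => hx t (by simp only [mem_Icc] at ht ⊢; omega)
  have hbal := mul_sqrt_div_eq_mul_sqrt_div (p := (b : ℝ) - s + 1) (q := (e : ℝ) - b)
    (L := (e : ℝ) - s + 1) (by linarith [(Nat.cast_le (α := ℝ)).2 hsb])
    (by linarith [(Nat.cast_lt (α := ℝ)).2 hbe]) (by ring)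
  rw [cusum, cusum, hsplit s b le_rfl hbe.le, hsplit (b + 1) e (by omega) le_rfl,
    sum_add_distrib, sum_add_distrib, sum_Icc_eq_of_eqOn_const (by omega) fun _ _ => rfl,
    sum_Icc_eq_of_eqOn_const (by omega) fun _ _ => rfl, ← mul_sum, ← mul_sum]
  push_cast
  linear_combination m * hbal

lemma cusum_psi_self (hsb : s ≤ b) (hbe : b < e) : cusum (psi s b e) s b e = 1 := by
  rw [cusum, sum_Icc_eq_of_eqOn_const (by omega) fun t ht =>
      psi_eq_left (mem_Icc.1 ht).1 (mem_Icc.1 ht).2,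
    sum_Icc_eq_of_eqOn_const (by omega) fun t ht =>
      psi_eq_right (mem_Icc.1 ht).1 (mem_Icc.1 ht).2]
  have hnorm := mul_sq_sqrt_div_add_mul_sq_sqrt_div (p := (b : ℝ) - s + 1) (q := (e : ℝ) - b)
    (L := (e : ℝ) - s + 1) (by linarith [(Nat.cast_le (α := ℝ)).2 hsb])
    (by linarith [(Nat.cast_lt (α := ℝ)).2 hbe]) (by ring)
  push_cast
  linear_combination hnorm

end Cusum

/-- Possible because `ψ^r_{s,e}` takes two distinct values on `[s, r]` and `[r + 1, e]`. -/
lemma exists_eqOn_affine_psi {s r e : ℕ} (hsr : s ≤ r) (hre : r < e) {f : ℕ → ℝ} {μ₁ μ₂ : ℝ}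
    (hf₁ : ∀ t, s ≤ t → t ≤ r → f t = μ₁) (hf₂ : ∀ t, r + 1 ≤ t → t ≤ e → f t = μ₂) :
    ∃ m k : ℝ, ∀ t ∈ Icc s e, f t = m + k * psi s r e t := by
  set α := √(((e : ℝ) - r) / (((e : ℝ) - s + 1) * ((r : ℝ) - s + 1)))
  set β := √(((r : ℝ) - s + 1) / (((e : ℝ) - s + 1) * ((e : ℝ) - r)))
  have hsrR : (s : ℝ) ≤ r := by exact_mod_cast hsr
  have hreR : (r : ℝ) < e := by exact_mod_cast hre
  have hβ : 0 < β := sqrt_pos.2 (by apply div_pos <;> nlinarith)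
  have hαβ : α + β ≠ 0 := (add_pos_of_nonneg_of_pos (sqrt_nonneg _) hβ).ne'
  refine ⟨μ₁ - (μ₁ - μ₂) / (α + β) * α, (μ₁ - μ₂) / (α + β), fun t ht => ?_⟩
  rw [mem_Icc] at ht
  rcases le_or_gt t r with htr | hrt
  · rw [hf₁ t ht.1 htr, psi_eq_left ht.1 htr]
    ring
  · rw [hf₂ t hrt ht.2, psi_eq_right hrt ht.2]
    field_simp
    ring

lemma normSqT_mul_sub_mul (T : ℕ) (u v : ℕ → ℝ) (a c : ℝ) :
    normSqT T (fun t => u t * a - v t * c) =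
      a ^ 2 * innerT T u u + c ^ 2 * innerT T v v - 2 * a * c * innerT T v u := by
  simp only [normSqT, innerT, mul_sum, ← sum_add_distrib, ← sum_sub_distrib]
  exact sum_congr rfl fun _ _ => by ring

theorem statement0_general (T s r e : ℕ) (hs : 1 ≤ s) (hsr : s ≤ r) (hre : r < e)
    (heT : e ≤ T) (f : ℕ → ℝ) (μ₁ μ₂ : ℝ)
    (hf₁ : ∀ t, s ≤ t → t ≤ r → f t = μ₁) (hf₂ : ∀ t, r + 1 ≤ t → t ≤ e → f t = μ₂) :
    ∀ b, s ≤ b → b < e →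
      normSqT T (fun t =>
          psi s b e t * innerT T f (psi s b e) - psi s r e t * innerT T f (psi s r e)) =
        (cusum f s r e) ^ 2 - (cusum f s b e) ^ 2 := by
  intro b hsb hbe
  obtain ⟨m, k, hf⟩ := exists_eqOn_affine_psi hsr hre hf₁ hf₂
  have hCb : cusum f s b e = k * cusum (psi s r e) s b e :=
    cusum_eq_mul_of_eqOn_affine hsb hbe hf
  have hCr : cusum f s r e = k := by
    rw [cusum_eq_mul_of_eqOn_affine hsr hre hf, cusum_psi_self hsr hre, mul_one]
  simp only [normSqT_mul_sub_mul, innerT_psi hs hsb hbe heT, innerT_psi hs hsr hre heT,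
    cusum_psi_self hsb hbe, cusum_psi_self hsr hre, hCr]
  linear_combination 2 * cusum f s b e * hCb

/-- for a signal with exactly one change-point `r` on `[s, e]`,
`‖ψ^b_{s,e}·⟨f, ψ^b_{s,e}⟩ − ψ^r_{s,e}·⟨f, ψ^r_{s,e}⟩‖₂² = (f̃^r_{s,e})² − (f̃^b_{s,e})²`. -/
theorem statement0 (T s r e : ℕ) (hT : 2 ≤ T) (hs : 1 ≤ s) (hsr : s ≤ r) (hre : r < e)
    (heT : e ≤ T) (f : ℕ → ℝ) (μ₁ μ₂ Δ : ℝ) (hμ : μ₁ ≠ μ₂)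
    (hf₁ : ∀ t, s ≤ t → t ≤ r → f t = μ₁) (hf₂ : ∀ t, r + 1 ≤ t → t ≤ e → f t = μ₂)
    (hΔ : Δ = |μ₂ - μ₁|) :
    ∀ b, s ≤ b → b < e →
      normSqT T (fun t =>
          psi s b e t * innerT T f (psi s b e) - psi s r e t * innerT T f (psi s r e)) =
        (cusum f s r e) ^ 2 - (cusum f s b e) ^ 2 :=
  statement0_general T s r e hs hsr hre heT f μ₁ μ₂ hf₁ hf₂
end

section
/- Let T ≥ 2 be an integer, let 1 ≤ s ≤ r < e ≤ T be integers, and let f ∈ ℝ^T have exactly one change-point r on [s,e] with values μ₁, μ₂ and jump magnitude Δ. Set ρ = |r − b|, η_L = r − s + 1 and η_R = e − r. Then: (i) for every integer b with r ≤ b < e, (f̃^r_{s,e})² − (f̃^b_{s,e})² = (ρ·η_L/(ρ + η_L))·Δ²; and (ii) for every integer b with s ≤ b < r, (f̃^r_{s,e})² − (f̃^b_{s,e})² = (ρ·η_R/(ρ + η_R))·Δ². -/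
open Real Finset

lemma sum_piece (g : ℕ → ℝ) (μ : ℝ) (a b : ℕ) (hab : a ≤ b + 1)
    (h : ∀ t, a ≤ t → t ≤ b → g t = μ) :
    ∑ t ∈ Finset.Icc a b, g t = ((b : ℝ) + 1 - a) * μ := by
  rw [Finset.sum_congr rfl (fun t ht => h t (Finset.mem_Icc.mp ht).1 (Finset.mem_Icc.mp ht).2),
    Finset.sum_const, Nat.card_Icc, nsmul_eq_mul, Nat.cast_sub hab]
  push_cast; ring

lemma sum_split (g : ℕ → ℝ) (a b c : ℕ) (hab : a ≤ b) (hbc : b ≤ c) :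
    ∑ t ∈ Finset.Icc a c, g t
      = (∑ t ∈ Finset.Icc a b, g t) + ∑ t ∈ Finset.Icc (b + 1) c, g t := by
  have h1 : Finset.Icc a c = Finset.Icc a b ∪ Finset.Icc (b + 1) c := by
    ext t; simp [Finset.mem_Icc, Finset.mem_union]; omega
  have h2 : Disjoint (Finset.Icc a b) (Finset.Icc (b + 1) c) := by
    simp [Finset.disjoint_left, Finset.mem_Icc]; omega
  rw [h1, Finset.sum_union h2]

lemma sqrt_swap (n1 n2 l : ℝ) (hn1 : 0 < n1) (hn2 : 0 < n2) (hl : 0 < l) :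
    Real.sqrt (n2 / (l * n1)) * n1 = Real.sqrt (n1 / (l * n2)) * n2 := by
  have h1 : Real.sqrt (n2 / (l * n1)) * n1 = Real.sqrt (n2 / (l * n1) * n1 ^ 2) := by
    rw [Real.sqrt_mul (by positivity), Real.sqrt_sq hn1.le]
  have h2 : Real.sqrt (n1 / (l * n2)) * n2 = Real.sqrt (n1 / (l * n2) * n2 ^ 2) := by
    rw [Real.sqrt_mul (by positivity), Real.sqrt_sq hn2.le]
  rw [h1, h2]
  congr 1
  field_simp

/-- exact computation of `(f̃^r_{s,e})² − (f̃^b_{s,e})²` for a signal with a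
single change-point `r` on `[s, e]`, where `ρ = |r − b|`, `η_L = r − s + 1`, `η_R = e − r`. -/
theorem statement1 (T s r e : ℕ) (hT : 2 ≤ T) (hs : 1 ≤ s) (hsr : s ≤ r) (hre : r < e)
    (heT : e ≤ T) (f : ℕ → ℝ) (μ₁ μ₂ Δ : ℝ) (hμ : μ₁ ≠ μ₂)
    (hf₁ : ∀ t, s ≤ t → t ≤ r → f t = μ₁) (hf₂ : ∀ t, r + 1 ≤ t → t ≤ e → f t = μ₂)
    (hΔ : Δ = |μ₂ - μ₁|) :
    (∀ b, r ≤ b → b < e →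
        (cusum f s r e) ^ 2 - (cusum f s b e) ^ 2 =
          (|(r : ℝ) - b| * ((r : ℝ) - s + 1) / (|(r : ℝ) - b| + ((r : ℝ) - s + 1))) * Δ ^ 2) ∧
    (∀ b, s ≤ b → b < r →
        (cusum f s r e) ^ 2 - (cusum f s b e) ^ 2 =
          (|(r : ℝ) - b| * ((e : ℝ) - r) / (|(r : ℝ) - b| + ((e : ℝ) - r))) * Δ ^ 2) := by
  have hΔ2 : Δ ^ 2 = (μ₁ - μ₂) ^ 2 := by
    rw [hΔ, sq_abs]; ring
  have hl : (0 : ℝ) < (e : ℝ) - s + 1 := by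
    have : s ≤ e := by omega
    have := (Nat.cast_le (α := ℝ)).mpr this
    linarith
  -- squared cusum for b ≥ r
  have key1 : ∀ b : ℕ, r ≤ b → b < e →
      (cusum f s b e) ^ 2
        = ((e : ℝ) - b) / (((e : ℝ) - s + 1) * ((b : ℝ) - s + 1))
            * (((r : ℝ) - s + 1) * (μ₁ - μ₂)) ^ 2 := by
    intro b hrb hbe
    have hn1 : (0 : ℝ) < (b : ℝ) - s + 1 := by
      have : s ≤ b := hsr.trans hrb
      have := (Nat.cast_le (α := ℝ)).mpr this; linarith
    have hn2 : (0 : ℝ) < (e : ℝ) - b := by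
      have := (Nat.cast_lt (α := ℝ)).mpr hbe; linarith
    have hS1 : ∑ t ∈ Finset.Icc s b, f t
        = ((r : ℝ) - s + 1) * μ₁ + ((b : ℝ) - r) * μ₂ := by
      rw [sum_split f s r b hsr hrb, sum_piece f μ₁ s r (by omega) hf₁,
        sum_piece f μ₂ (r + 1) b (by omega)
          (fun t ht1 ht2 => hf₂ t ht1 (ht2.trans hbe.le))]
      push_cast; ring
    have hS2 : ∑ t ∈ Finset.Icc (b + 1) e, f t = ((e : ℝ) - b) * μ₂ := by
      rw [sum_piece f μ₂ (b + 1) e (by omega)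
        (fun t ht1 ht2 => hf₂ t (by omega) ht2)]
      push_cast; ring
    have hsw := sqrt_swap ((b : ℝ) - s + 1) ((e : ℝ) - b) ((e : ℝ) - s + 1) hn1 hn2 hl
    have hc : cusum f s b e
        = Real.sqrt (((e : ℝ) - b) / (((e : ℝ) - s + 1) * ((b : ℝ) - s + 1)))
            * (((r : ℝ) - s + 1) * (μ₁ - μ₂)) := by
      rw [cusum, hS1, hS2]
      have : Real.sqrt (((b : ℝ) - s + 1) / (((e : ℝ) - s + 1) * ((e : ℝ) - b)))
            * (((e : ℝ) - b) * μ₂)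
          = Real.sqrt (((e : ℝ) - b) / (((e : ℝ) - s + 1) * ((b : ℝ) - s + 1)))
            * (((b : ℝ) - s + 1) * μ₂) := by
        rw [← mul_assoc, ← mul_assoc, ← hsw]
      rw [this]; ring
    rw [hc, mul_pow, Real.sq_sqrt (by positivity)]
  -- squared cusum for s ≤ b < r
  have key2 : ∀ b : ℕ, s ≤ b → b < r →
      (cusum f s b e) ^ 2
        = ((b : ℝ) - s + 1) / (((e : ℝ) - s + 1) * ((e : ℝ) - b))
            * (((e : ℝ) - r) * (μ₁ - μ₂)) ^ 2 := by
    intro b hsb hbr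
    have hn1 : (0 : ℝ) < (b : ℝ) - s + 1 := by
      have := (Nat.cast_le (α := ℝ)).mpr hsb; linarith
    have hn2 : (0 : ℝ) < (e : ℝ) - b := by
      have : b < e := by omega
      have := (Nat.cast_lt (α := ℝ)).mpr this; linarith
    have hS1 : ∑ t ∈ Finset.Icc s b, f t = ((b : ℝ) - s + 1) * μ₁ := by
      rw [sum_piece f μ₁ s b (by omega)
        (fun t ht1 ht2 => hf₁ t ht1 (by omega))]
      push_cast; ring
    have hS2 : ∑ t ∈ Finset.Icc (b + 1) e, f t
        = ((r : ℝ) - b) * μ₁ + ((e : ℝ) - r) * μ₂ := by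
      rw [sum_split f (b + 1) r e (by omega) (by omega),
        sum_piece f μ₁ (b + 1) r (by omega)
          (fun t ht1 ht2 => hf₁ t (by omega) ht2),
        sum_piece f μ₂ (r + 1) e (by omega) hf₂]
      push_cast; ring
    have hsw := sqrt_swap ((b : ℝ) - s + 1) ((e : ℝ) - b) ((e : ℝ) - s + 1) hn1 hn2 hl
    have hc : cusum f s b e
        = Real.sqrt (((b : ℝ) - s + 1) / (((e : ℝ) - s + 1) * ((e : ℝ) - b)))
            * (((e : ℝ) - r) * (μ₁ - μ₂)) := by
      rw [cusum, hS1, hS2]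
      have : Real.sqrt (((e : ℝ) - b) / (((e : ℝ) - s + 1) * ((b : ℝ) - s + 1)))
            * (((b : ℝ) - s + 1) * μ₁)
          = Real.sqrt (((b : ℝ) - s + 1) / (((e : ℝ) - s + 1) * ((e : ℝ) - b)))
            * (((e : ℝ) - b) * μ₁) := by
        rw [← mul_assoc, ← mul_assoc, hsw]
      rw [this]; ring
    rw [hc, mul_pow, Real.sq_sqrt (by positivity)]
  have hcr := key1 r le_rfl hre
  have hηL : (0 : ℝ) < (r : ℝ) - s + 1 := by
    have := (Nat.cast_le (α := ℝ)).mpr hsr; linarith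
  have hηR : (0 : ℝ) < (e : ℝ) - r := by
    have := (Nat.cast_lt (α := ℝ)).mpr hre; linarith
  constructor
  · intro b hrb hbe
    have hn1 : (0 : ℝ) < (b : ℝ) - s + 1 := by
      have : s ≤ b := hsr.trans hrb
      have := (Nat.cast_le (α := ℝ)).mpr this; linarith
    have hn2 : (0 : ℝ) < (e : ℝ) - b := by
      have := (Nat.cast_lt (α := ℝ)).mpr hbe; linarith
    have habs : |(r : ℝ) - b| = (b : ℝ) - r := by
      rw [abs_sub_comm, abs_of_nonneg]
      have := (Nat.cast_le (α := ℝ)).mpr hrb; linarith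
    have hρ : (b : ℝ) - r ≥ 0 := by
      have := (Nat.cast_le (α := ℝ)).mpr hrb; linarith
    rw [hcr, key1 b hrb hbe, habs, hΔ2]
    have hden : ((b : ℝ) - r) + ((r : ℝ) - s + 1) = (b : ℝ) - s + 1 := by ring
    rw [hden]
    field_simp
    ring
  · intro b hsb hbr
    have hn1 : (0 : ℝ) < (b : ℝ) - s + 1 := by
      have := (Nat.cast_le (α := ℝ)).mpr hsb; linarith
    have hn2 : (0 : ℝ) < (e : ℝ) - b := by
      have : b < e := by omega
      have := (Nat.cast_lt (α := ℝ)).mpr this; linarith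
    have habs : |(r : ℝ) - b| = (r : ℝ) - b := by
      rw [abs_of_nonneg]
      have := (Nat.cast_le (α := ℝ)).mpr hbr.le; linarith
    rw [hcr, key2 b hsb hbr, habs, hΔ2]
    have hden : ((r : ℝ) - b) + ((e : ℝ) - r) = (e : ℝ) - b := by ring
    rw [hden]
    field_simp
    ring
end

section
/- Let T ≥ 2 be an integer, let 1 ≤ s ≤ r < e ≤ T be integers, and let f ∈ ℝ^T have exactly one change-point r on [s,e] with values μ₁, μ₂. Then the absolute CUSUM over [s,e] is maximized at the change-point: |f̃^b_{s,e}| ≤ |f̃^r_{s,e}| for every integer b with s ≤ b < e. -/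
open Real Finset

private lemma sum_Icc_const (f : ℕ → ℝ) (μ : ℝ) (a b : ℕ) (hab : a ≤ b)
    (h : ∀ t, a ≤ t → t ≤ b → f t = μ) :
    ∑ t ∈ Finset.Icc a b, f t = ((b : ℝ) + 1 - a) * μ := by
  have h1 : ∑ t ∈ Finset.Icc a b, f t = ∑ t ∈ Finset.Icc a b, μ :=
    Finset.sum_congr rfl fun t ht => by
      rw [Finset.mem_Icc] at ht; exact h t ht.1 ht.2
  rw [h1, Finset.sum_const, Nat.card_Icc, nsmul_eq_mul]
  have h2 : a ≤ b + 1 := hab.trans (Nat.le_succ b)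
  rw [Nat.cast_sub h2]
  push_cast
  ring

private lemma sum_Ioc_const (f : ℕ → ℝ) (μ : ℝ) (a b : ℕ) (hab : a ≤ b)
    (h : ∀ t, a + 1 ≤ t → t ≤ b → f t = μ) :
    ∑ t ∈ Finset.Ioc a b, f t = ((b : ℝ) - a) * μ := by
  have h1 : ∑ t ∈ Finset.Ioc a b, f t = ∑ t ∈ Finset.Ioc a b, μ :=
    Finset.sum_congr rfl fun t ht => by
      rw [Finset.mem_Ioc] at ht; exact h t ht.1 ht.2
  rw [h1, Finset.sum_const, Nat.card_Ioc, nsmul_eq_mul, Nat.cast_sub hab]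

private lemma sqrt_swap_s5 (a b c : ℝ) (ha : 0 < a) (hb : 0 < b) (hc : 0 < c) :
    Real.sqrt (a / (c * b)) * b = Real.sqrt (b / (c * a)) * a := by
  have h1 : Real.sqrt (a / (c * b)) * b = Real.sqrt (a / (c * b) * b ^ 2) := by
    rw [Real.sqrt_mul (by positivity), Real.sqrt_sq hb.le]
  have h2 : Real.sqrt (b / (c * a)) * a = Real.sqrt (b / (c * a) * a ^ 2) := by
    rw [Real.sqrt_mul (by positivity), Real.sqrt_sq ha.le]
  rw [h1, h2]
  congr 1
  field_simp

private lemma cusum_left (s b r e : ℕ) (f : ℕ → ℝ) (μ₁ μ₂ : ℝ)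
    (hsb : s ≤ b) (hbr : b ≤ r) (hre : r < e)
    (hf₁ : ∀ t, s ≤ t → t ≤ r → f t = μ₁) (hf₂ : ∀ t, r + 1 ≤ t → t ≤ e → f t = μ₂) :
    cusum f s b e =
      Real.sqrt (((b : ℝ) - s + 1) / (((e : ℝ) - s + 1) * ((e : ℝ) - b))) *
        (((e : ℝ) - r) * (μ₁ - μ₂)) := by
  have hsb' : (s : ℝ) ≤ b := by exact_mod_cast hsb
  have hbr' : (b : ℝ) ≤ r := by exact_mod_cast hbr
  have hre' : (r : ℝ) < e := by exact_mod_cast hre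
  have hn₁ : (0 : ℝ) < (b : ℝ) - s + 1 := by linarith
  have hn₂ : (0 : ℝ) < (e : ℝ) - b := by linarith
  have hℓ : (0 : ℝ) < (e : ℝ) - s + 1 := by linarith
  have hswap := sqrt_swap_s5 ((e : ℝ) - b) ((b : ℝ) - s + 1) ((e : ℝ) - s + 1) hn₂ hn₁ hℓ
  have hS₁ : ∑ t ∈ Finset.Icc s b, f t = ((b : ℝ) + 1 - s) * μ₁ :=
    sum_Icc_const f μ₁ s b hsb fun t h1 h2 => hf₁ t h1 (h2.trans hbr)
  have hS₂ : ∑ t ∈ Finset.Icc (b + 1) e, f t = ((r : ℝ) - b) * μ₁ + ((e : ℝ) - r) * μ₂ := by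
    rw [show Finset.Icc (b + 1) e = Finset.Ioc b e from Finset.Icc_add_one_left_eq_Ioc b e,
      ← Finset.sum_Ioc_consecutive f hbr hre.le,
      sum_Ioc_const f μ₁ b r hbr (fun t h1 h2 => hf₁ t (by omega) h2),
      sum_Ioc_const f μ₂ r e hre.le (fun t h1 h2 => hf₂ t h1 h2)]
  unfold cusum
  rw [hS₁, hS₂]
  linear_combination μ₁ * hswap

private lemma cusum_right (s b r e : ℕ) (f : ℕ → ℝ) (μ₁ μ₂ : ℝ)
    (hsr : s ≤ r) (hrb : r < b) (hbe : b < e)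
    (hf₁ : ∀ t, s ≤ t → t ≤ r → f t = μ₁) (hf₂ : ∀ t, r + 1 ≤ t → t ≤ e → f t = μ₂) :
    cusum f s b e =
      Real.sqrt (((e : ℝ) - b) / (((e : ℝ) - s + 1) * ((b : ℝ) - s + 1))) *
        (((r : ℝ) - s + 1) * (μ₁ - μ₂)) := by
  have hsr' : (s : ℝ) ≤ r := by exact_mod_cast hsr
  have hrb' : (r : ℝ) < b := by exact_mod_cast hrb
  have hbe' : (b : ℝ) < e := by exact_mod_cast hbe
  have hn₁ : (0 : ℝ) < (b : ℝ) - s + 1 := by linarith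
  have hℓ : (0 : ℝ) < (e : ℝ) - s + 1 := by linarith
  have hswap := sqrt_swap_s5 ((e : ℝ) - b) ((b : ℝ) - s + 1) ((e : ℝ) - s + 1)
  have hS₁ : ∑ t ∈ Finset.Icc s b, f t =
      ((r : ℝ) + 1 - s) * μ₁ + ((b : ℝ) - r) * μ₂ := by
    have hsplit : Finset.Icc s r ∪ Finset.Ioc r b = Finset.Icc s b := by
      ext t
      simp only [Finset.mem_union, Finset.mem_Icc, Finset.mem_Ioc]
      omega
    have hdisj : Disjoint (Finset.Icc s r) (Finset.Ioc r b) := by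
      simp only [Finset.disjoint_left, Finset.mem_Icc, Finset.mem_Ioc]
      omega
    rw [← hsplit, Finset.sum_union hdisj,
      sum_Icc_const f μ₁ s r hsr (fun t h1 h2 => hf₁ t h1 h2),
      sum_Ioc_const f μ₂ r b hrb.le (fun t h1 h2 => hf₂ t h1 (h2.trans hbe.le))]
  have hS₂ : ∑ t ∈ Finset.Icc (b + 1) e, f t = ((e : ℝ) - b) * μ₂ := by
    rw [show Finset.Icc (b + 1) e = Finset.Ioc b e from Finset.Icc_add_one_left_eq_Ioc b e,
      sum_Ioc_const f μ₂ b e hbe.le (fun t h1 h2 => hf₂ t (by omega) h2)]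
  unfold cusum
  rw [hS₁, hS₂]
  have hn₂ : (0 : ℝ) < (e : ℝ) - b := by linarith
  have hswap' := hswap hn₂ hn₁ hℓ
  linear_combination μ₂ * hswap'

/-- for a signal with exactly one change-point `r` on `[s, e]`, the absolute
CUSUM over `[s, e]` is maximized at the change-point. -/
theorem statement5 (T s r e : ℕ) (hT : 2 ≤ T) (hs : 1 ≤ s) (hsr : s ≤ r) (hre : r < e)
    (heT : e ≤ T) (f : ℕ → ℝ) (μ₁ μ₂ : ℝ) (hμ : μ₁ ≠ μ₂)
    (hf₁ : ∀ t, s ≤ t → t ≤ r → f t = μ₁) (hf₂ : ∀ t, r + 1 ≤ t → t ≤ e → f t = μ₂) :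
    ∀ b, s ≤ b → b < e → |cusum f s b e| ≤ |cusum f s r e| := by
  intro b hsb hbe
  have hsr' : (s : ℝ) ≤ r := by exact_mod_cast hsr
  have hre' : (r : ℝ) < e := by exact_mod_cast hre
  have hsb' : (s : ℝ) ≤ b := by exact_mod_cast hsb
  have hbe' : (b : ℝ) < e := by exact_mod_cast hbe
  have hℓ : (0 : ℝ) < (e : ℝ) - s + 1 := by linarith
  have hvr : (0 : ℝ) < (r : ℝ) - s + 1 := by linarith
  have her : (0 : ℝ) < (e : ℝ) - r := by linarith
  have hcr : cusum f s r e =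
      Real.sqrt (((r : ℝ) - s + 1) / (((e : ℝ) - s + 1) * ((e : ℝ) - r))) *
        (((e : ℝ) - r) * (μ₁ - μ₂)) :=
    cusum_left s r r e f μ₁ μ₂ hsr le_rfl hre hf₁ hf₂
  have habs : ∀ X c d : ℝ, 0 ≤ c →
      |Real.sqrt X * (c * d)| = Real.sqrt X * c * |d| := by
    intro X c d hc
    rw [abs_mul, abs_of_nonneg (Real.sqrt_nonneg _), abs_mul, abs_of_nonneg hc, mul_assoc]
  rcases le_or_gt b r with hbr | hrb
  · -- b ≤ r
    rw [cusum_left s b r e f μ₁ μ₂ hsb hbr hre hf₁ hf₂, hcr,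
      habs _ _ _ her.le, habs _ _ _ her.le]
    apply mul_le_mul_of_nonneg_right _ (abs_nonneg _)
    apply mul_le_mul_of_nonneg_right _ her.le
    apply Real.sqrt_le_sqrt
    have hbr' : (b : ℝ) ≤ r := by exact_mod_cast hbr
    have hd1 : (0:ℝ) < ((e:ℝ) - s + 1) * ((e:ℝ) - b) := mul_pos hℓ (by linarith)
    have hd2 : (0:ℝ) < ((e:ℝ) - s + 1) * ((e:ℝ) - r) := mul_pos hℓ her
    rw [div_le_div_iff₀ hd1 hd2]
    nlinarith [mul_nonneg (mul_nonneg hℓ.le hℓ.le) (sub_nonneg.mpr hbr')]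
  · -- r < b
    rw [cusum_right s b r e f μ₁ μ₂ hsr hrb hbe hf₁ hf₂, hcr,
      habs _ _ _ hvr.le, habs _ _ _ her.le]
    have hrb' : (r : ℝ) < b := by exact_mod_cast hrb
    have hn₁ : (0 : ℝ) < (b : ℝ) - s + 1 := by linarith
    have hn₂ : (0 : ℝ) < (e : ℝ) - b := by linarith
    apply mul_le_mul_of_nonneg_right _ (abs_nonneg _)
    have e1 : Real.sqrt (((e:ℝ) - b) / (((e:ℝ) - s + 1) * ((b:ℝ) - s + 1))) * ((r:ℝ) - s + 1)
        = Real.sqrt (((e:ℝ) - b) / (((e:ℝ) - s + 1) * ((b:ℝ) - s + 1)) * ((r:ℝ) - s + 1) ^ 2) := by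
      rw [Real.sqrt_mul (by positivity), Real.sqrt_sq hvr.le]
    have e2 : Real.sqrt (((r:ℝ) - s + 1) / (((e:ℝ) - s + 1) * ((e:ℝ) - r))) * ((e:ℝ) - r)
        = Real.sqrt (((r:ℝ) - s + 1) / (((e:ℝ) - s + 1) * ((e:ℝ) - r)) * ((e:ℝ) - r) ^ 2) := by
      rw [Real.sqrt_mul (by positivity), Real.sqrt_sq her.le]
    rw [e1, e2]
    apply Real.sqrt_le_sqrt
    have hd1 : (0:ℝ) < ((e:ℝ) - s + 1) * ((b:ℝ) - s + 1) := mul_pos hℓ hn₁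
    have hd2 : (0:ℝ) < ((e:ℝ) - s + 1) * ((e:ℝ) - r) := mul_pos hℓ her
    rw [div_mul_eq_mul_div, div_mul_eq_mul_div, div_le_div_iff₀ hd1 hd2]
    nlinarith [mul_nonneg (mul_nonneg (mul_nonneg (mul_pos hℓ hℓ).le hvr.le) her.le)
      (sub_nonneg.mpr hrb'.le)]
end

section
/- Let T ≥ 2 be an integer, let 1 ≤ s ≤ r < e ≤ T be integers, and let f ∈ ℝ^T have exactly one change-point r on [s,e] with values μ₁, μ₂ and jump magnitude Δ. Let n ≥ 3/2, δ > 0, f̲ > 0 and C̲ > 0 be reals with Δ ≥ f̲, √δ·f̲ ≥ C̲·√(log T), and min{e−r, r−s+1} ≥ δ/(2n). Let X ∈ ℝ^T satisfy |X̃^b_{s,e} − f̃^b_{s,e}| ≤ √(8·log T) for every integer b with s ≤ b < e. Then max over integers b with s ≤ b < e of |X̃^b_{s,e}| ≥ (1/√(4n) − 2√2/C̲)·√δ·f̲. -/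
open Real Finset

/-! At the true change-point `b = r` the CUSUM of the step signal is
`√((r - s + 1)(e - r)/(e - s + 1)) · (μ₁ - μ₂)`. The quantity under the root is half the harmonic
mean of the two segment lengths, hence at least half their minimum, which yields the signal
term `√δ · f̲ / √(4n)`. The signal-to-noise assumption bounds the noise `√(8 log T)` by
`(2√2 / C̲) · √δ · f̲`, and the triangle inequality at `b = r` concludes. -/

theorem sum_Icc_of_forall_eq {R : Type*} [Ring R] {f : ℕ → R} {μ : R} {m k : ℕ}
    (hmk : m ≤ k + 1) (h : ∀ t, m ≤ t → t ≤ k → f t = μ) :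
    ∑ t ∈ Icc m k, f t = ((k : R) - m + 1) * μ := by
  rw [sum_congr rfl fun t ht => h t (mem_Icc.mp ht).1 (mem_Icc.mp ht).2, sum_const,
    Nat.card_Icc, nsmul_eq_mul, Nat.cast_sub hmk]
  push_cast
  congr 1
  abel

theorem sqrt_div_mul_mul_self {a b c : ℝ} (ha : 0 ≤ a) :
    √(b / (c * a)) * a = √(a * b / c) := by
  rcases ha.eq_or_lt with rfl | ha
  · simp
  rw [← sqrt_sq ha.le, ← sqrt_mul' _ (sq_nonneg _), sqrt_sq ha.le]
  congr 1
  field_simp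

theorem cusum_of_step {f : ℕ → ℝ} {μ₁ μ₂ : ℝ} {s r e : ℕ} (hsr : s ≤ r) (hre : r < e)
    (hf₁ : ∀ t, s ≤ t → t ≤ r → f t = μ₁) (hf₂ : ∀ t, r + 1 ≤ t → t ≤ e → f t = μ₂) :
    cusum f s r e = √(((r : ℝ) - s + 1) * (e - r) / (e - s + 1)) * (μ₁ - μ₂) := by
  have hs : (s : ℝ) ≤ r := by exact_mod_cast hsr
  have he : (r : ℝ) < e := by exact_mod_cast hre
  rw [cusum, sum_Icc_of_forall_eq (by omega) hf₁, sum_Icc_of_forall_eq (by omega) hf₂]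
  push_cast
  rw [show (e : ℝ) - (r + 1) + 1 = e - r by ring, ← mul_assoc, ← mul_assoc,
    sqrt_div_mul_mul_self (by linarith), sqrt_div_mul_mul_self (by linarith),
    mul_comm ((e : ℝ) - r)]
  ring

theorem min_div_two_le_mul_div_add {a b : ℝ} (ha : 0 < a) (hb : 0 < b) :
    min a b / 2 ≤ a * b / (a + b) := by
  rw [div_le_div_iff₀ two_pos (by positivity)]
  nlinarith [min_le_left a b, min_le_right a b]

theorem sqrt_half_mul_abs_sub_le_abs_cusum_of_step {f : ℕ → ℝ} {μ₁ μ₂ c : ℝ} {s r e : ℕ}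
    (hsr : s ≤ r) (hre : r < e)
    (hf₁ : ∀ t, s ≤ t → t ≤ r → f t = μ₁) (hf₂ : ∀ t, r + 1 ≤ t → t ≤ e → f t = μ₂)
    (hc : c ≤ min ((e : ℝ) - r) ((r : ℝ) - s + 1)) :
    √(c / 2) * |μ₁ - μ₂| ≤ |cusum f s r e| := by
  have hs : (s : ℝ) ≤ r := by exact_mod_cast hsr
  have he : (r : ℝ) < e := by exact_mod_cast hre
  have hmean := min_div_two_le_mul_div_add (a := (r : ℝ) - s + 1) (b := (e : ℝ) - r)
    (by linarith) (by linarith)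
  have hc' : c / 2 ≤ ((r : ℝ) - s + 1) * (e - r) / (e - s + 1) := by
    rw [min_comm] at hc
    calc c / 2 ≤ _ := by gcongr
      _ ≤ _ := hmean
      _ = _ := by ring_nf
  rw [cusum_of_step hsr hre hf₁ hf₂, abs_mul, abs_of_nonneg (sqrt_nonneg _)]
  exact mul_le_mul_of_nonneg_right (sqrt_le_sqrt hc') (abs_nonneg _)

theorem sqrt_eight_mul_le {x y C : ℝ} (hC : 0 < C) (h : C * √x ≤ y) :
    √(8 * x) ≤ 2 * √2 / C * y := by
  have h8 : √(8 * x) = 2 * √2 * √x := by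
    rw [sqrt_mul (by norm_num), show (8 : ℝ) = 2 ^ 2 * 2 by norm_num,
      sqrt_mul (by positivity), sqrt_sq zero_le_two]
  calc √(8 * x) = 2 * √2 * √x := h8
    _ ≤ 2 * √2 * (y / C) := by gcongr; rwa [le_div_iff₀' hC]
    _ = 2 * √2 / C * y := by ring

theorem statement6_general (T s r e : ℕ) (hsr : s ≤ r) (hre : r < e)
    (f : ℕ → ℝ) (μ₁ μ₂ Δ : ℝ)
    (hf₁ : ∀ t, s ≤ t → t ≤ r → f t = μ₁) (hf₂ : ∀ t, r + 1 ≤ t → t ≤ e → f t = μ₂)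
    (hΔ : Δ = |μ₂ - μ₁|)
    (n δ flow Clow : ℝ) (hn : (3 : ℝ) / 2 ≤ n)
    (hClow : 0 < Clow) (hΔflow : flow ≤ Δ)
    (hSNR : Clow * Real.sqrt (Real.log T) ≤ Real.sqrt δ * flow)
    (hmin : δ / (2 * n) ≤ min ((e : ℝ) - r) ((r : ℝ) - s + 1))
    (X : ℕ → ℝ)
    (hX : ∀ b, s ≤ b → b < e →
      |cusum X s b e - cusum f s b e| ≤ Real.sqrt (8 * Real.log T)) :
    ∃ b, s ≤ b ∧ b < e ∧
      (1 / Real.sqrt (4 * n) - 2 * Real.sqrt 2 / Clow) * Real.sqrt δ * flow ≤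
        |cusum X s b e| := by
  refine ⟨r, hsr, hre, ?_⟩
  have hsignal : √δ / √(4 * n) * flow ≤ |cusum f s r e| := by
    have h := sqrt_half_mul_abs_sub_le_abs_cusum_of_step hsr hre hf₁ hf₂ hmin
    rw [div_div, show 2 * n * 2 = 4 * n by ring, sqrt_div' _ (by linarith), abs_sub_comm,
      ← hΔ] at h
    exact le_trans (by gcongr) h
  have hnoise := sqrt_eight_mul_le hClow hSNR
  calc (1 / √(4 * n) - 2 * √2 / Clow) * √δ * flow
      = √δ / √(4 * n) * flow - 2 * √2 / Clow * (√δ * flow) := by ring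
    _ ≤ |cusum f s r e| - |cusum X s r e - cusum f s r e| := by linarith [hX r hsr hre]
    _ ≤ |cusum X s r e| := by
      linarith [abs_sub_abs_le_abs_sub (cusum f s r e) (cusum X s r e),
        abs_sub_comm (cusum f s r e) (cusum X s r e)]

/-- lower bound on the maximal absolute CUSUM of the observed data over
`[s, e]`, when the interval contains a single change-point whose distance to both
end-points is at least `δ/(2n)`. -/
theorem statement6 (T s r e : ℕ) (hT : 2 ≤ T) (hs : 1 ≤ s) (hsr : s ≤ r) (hre : r < e)
    (heT : e ≤ T) (f : ℕ → ℝ) (μ₁ μ₂ Δ : ℝ) (hμ : μ₁ ≠ μ₂)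
    (hf₁ : ∀ t, s ≤ t → t ≤ r → f t = μ₁) (hf₂ : ∀ t, r + 1 ≤ t → t ≤ e → f t = μ₂)
    (hΔ : Δ = |μ₂ - μ₁|)
    (n δ flow Clow : ℝ) (hn : (3 : ℝ) / 2 ≤ n) (hδ : 0 < δ) (hflow : 0 < flow)
    (hClow : 0 < Clow) (hΔflow : flow ≤ Δ)
    (hSNR : Clow * Real.sqrt (Real.log T) ≤ Real.sqrt δ * flow)
    (hmin : δ / (2 * n) ≤ min ((e : ℝ) - r) ((r : ℝ) - s + 1))
    (X : ℕ → ℝ)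
    (hX : ∀ b, s ≤ b → b < e →
      |cusum X s b e - cusum f s b e| ≤ Real.sqrt (8 * Real.log T)) :
    ∃ b, s ≤ b ∧ b < e ∧
      (1 / Real.sqrt (4 * n) - 2 * Real.sqrt 2 / Clow) * Real.sqrt δ * flow ≤
        |cusum X s b e| :=
  statement6_general T s r e hsr hre f μ₁ μ₂ Δ hf₁ hf₂ hΔ n δ flow Clow hn hClow hΔflow hSNR hmin X
    hX
end

section
/- Let T be an integer, let 1 ≤ s < r < e ≤ T be integers, and let f ∈ ℝ^T be continuous piecewise-linear on [s,e] with exactly one change-point (kink) at r, with kink magnitude Δ. Set η = min{r − s, e − r}. Then C^r_{s,e}(f) = max over integers b with s < b < e of C^b_{s,e}(f), and (1/√24)·η^{3/2}·Δ ≤ C^r_{s,e}(f) ≤ (1/√3)·(η+1)^{3/2}·Δ. -/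
open Real Finset

/-- Normalizing constant `α^b_{s,e}` of the linear contrast vector. -/
noncomputable def alphaC (s b e : ℕ) : ℝ :=
  Real.sqrt (6 / (((e : ℝ) - s + 1) * (((e : ℝ) - s + 1) ^ 2 - 1) *
    (1 + ((e : ℝ) - b + 1) * ((b : ℝ) - s + 1) + ((e : ℝ) - b) * ((b : ℝ) - s))))

/-- Normalizing constant `β^b_{s,e}` of the linear contrast vector. -/
noncomputable def betaC (s b e : ℕ) : ℝ :=
  Real.sqrt ((((e : ℝ) - b + 1) * ((e : ℝ) - b)) / (((b : ℝ) - s + 1) * ((b : ℝ) - s)))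

/-- The linear contrast vector `ϕ^b_{s,e}`, given coordinatewise as a function of `t`. -/
noncomputable def phiC (s b e t : ℕ) : ℝ :=
  if s ≤ t ∧ t ≤ b then
    alphaC s b e * betaC s b e *
      (((e : ℝ) + 2 * b - 3 * s + 2) * t - ((b : ℝ) * e + (b : ℝ) * s - 2 * (s : ℝ) ^ 2 + 2 * s))
  else if b + 1 ≤ t ∧ t ≤ e then
    -(alphaC s b e / betaC s b e) *
      ((3 * (e : ℝ) - 2 * b - s + 2) * t - (2 * (e : ℝ) ^ 2 + 2 * e - (b : ℝ) * e - (b : ℝ) * s))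
  else 0

/-- The contrast value `C^b_{s,e}(x) = |⟨x, ϕ^b_{s,e}⟩|`. -/
noncomputable def contrastC (T s b e : ℕ) (x : ℕ → ℝ) : ℝ := |innerT T x (phiC s b e)|

/-! The contrast vector `ϕ^b_{s,e}` is a unit vector supported on `[s, e]` and orthogonal to every
affine sequence: up to sign and normalisation it is the residual of the kink `t ↦ (t - b)₊` after
projecting out the affine sequences on `[s, e]`. Hence on `[s, e]` the signal is an affine sequence
plus `(b₂ - b₁) κ ϕ^r_{s,e}`, so `⟨f, ϕ^b⟩ = (b₂ - b₁) κ ⟨ϕ^r, ϕ^b⟩`, Cauchy–Schwarz makes `b = r`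
the maximiser, and `C^r(f) = Δ |κ|`. With `u = r - s` and `v = e - r` one computes
`κ² = u(u+1) v(v+1) (2 + u + v + 2uv) / (6 (u+v) (u+v+1) (u+v+2))`, and both bounds are polynomial
inequalities in `u ≤ v`. -/

noncomputable def affineProductPrimitive (p q p' q' k : ℝ) : ℝ :=
  p * p' * k * (k - 1) * (2 * k - 1) / 6 - (p * q' + q * p') * k * (k - 1) / 2 + q * q' * k

lemma sum_Ico_affine_mul_affine (p q p' q' : ℝ) {m n : ℕ} (hmn : m ≤ n) :
    ∑ t ∈ Ico m n, (p * t - q) * (p' * t - q') =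
      affineProductPrimitive p q p' q' n - affineProductPrimitive p q p' q' m := by
  induction n, hmn using Nat.le_induction with
  | base => simp
  | succ n hmn ih =>
    rw [Finset.sum_Ico_succ_top hmn, ih]
    simp only [affineProductPrimitive]
    push_cast
    ring

lemma abs_innerT_le_one {T : ℕ} {x y : ℕ → ℝ} (hx : innerT T x x = 1) (hy : innerT T y y = 1) :
    |innerT T x y| ≤ 1 := by
  have h := Finset.sum_mul_sq_le_sq_mul_sq (Icc 1 T) x y
  simp only [sq] at h
  rw [← innerT, ← innerT, ← innerT, hx, hy, mul_one] at h
  exact abs_le_one_iff_mul_self_le_one.mpr h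

lemma one_div_sqrt_mul_rpow_three_halves {x : ℝ} (hx : 0 ≤ x) (c : ℝ) :
    1 / √c * x ^ ((3 : ℝ) / 2) = √(x ^ 3 / c) := by
  have h : √(x ^ 3) = x ^ ((3 : ℝ) / 2) := by
    rw [Real.sqrt_eq_rpow, ← Real.rpow_natCast, ← Real.rpow_mul hx]
    norm_num
  rw [Real.sqrt_div (pow_nonneg hx 3), h, one_div_mul_eq_div]

noncomputable def phiLeft (s b e : ℕ) (t : ℝ) : ℝ :=
  ((e : ℝ) + 2 * b - 3 * s + 2) * t - ((b : ℝ) * e + (b : ℝ) * s - 2 * (s : ℝ) ^ 2 + 2 * s)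

noncomputable def phiRight (s b e : ℕ) (t : ℝ) : ℝ :=
  (3 * (e : ℝ) - 2 * b - s + 2) * t - (2 * (e : ℝ) ^ 2 + 2 * e - (b : ℝ) * e - (b : ℝ) * s)

section Contrast

variable {s b e t : ℕ}

lemma phiC_of_le_of_le (hst : s ≤ t) (htb : t ≤ b) :
    phiC s b e t = alphaC s b e * betaC s b e * phiLeft s b e t := by
  rw [phiC, if_pos ⟨hst, htb⟩, phiLeft]

lemma phiC_of_lt_of_le (hbt : b < t) (hte : t ≤ e) :
    phiC s b e t = -(alphaC s b e / betaC s b e) * phiRight s b e t := by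
  rw [phiC, if_neg (by omega), if_pos ⟨hbt, hte⟩, phiRight]

lemma phiC_eq_zero (hsb : s ≤ b) (hbe : b ≤ e) (ht : t < s ∨ e < t) : phiC s b e t = 0 := by
  rw [phiC, if_neg (by omega), if_neg (by omega)]

-- `innerT` only sees the indices `1, …, T`, hence `1 ≤ s` and `e ≤ T`.
lemma innerT_phiC {T : ℕ} (x : ℕ → ℝ) (hs : 1 ≤ s) (hsb : s ≤ b) (hbe : b ≤ e) (heT : e ≤ T) :
    innerT T x (phiC s b e) =
      alphaC s b e * betaC s b e * ∑ t ∈ Ico s (b + 1), x t * phiLeft s b e t -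
        alphaC s b e / betaC s b e * ∑ t ∈ Ico (b + 1) (e + 1), x t * phiRight s b e t := by
  have hsupp : ∑ t ∈ Icc 1 T, x t * phiC s b e t = ∑ t ∈ Ico s (e + 1), x t * phiC s b e t := by
    refine (Finset.sum_subset (fun t ht => ?_) fun t _ ht => ?_).symm
    · simp only [Finset.mem_Ico, Finset.mem_Icc] at ht ⊢; omega
    · simp only [Finset.mem_Ico] at ht
      rw [phiC_eq_zero hsb hbe (by omega), mul_zero]
  rw [innerT, hsupp,
    ← Finset.sum_Ico_consecutive _ (by omega : s ≤ b + 1) (by omega : b + 1 ≤ e + 1),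
    Finset.mul_sum, Finset.mul_sum, sub_eq_add_neg, ← Finset.sum_neg_distrib]
  congr 1 <;> refine Finset.sum_congr rfl fun t ht => ?_ <;> simp only [Finset.mem_Ico] at ht
  · rw [phiC_of_le_of_le ht.1 (by omega)]; ring
  · rw [phiC_of_lt_of_le (by omega) (by omega)]; ring

lemma betaC_radicand_pos (hsb : s < b) (hbe : b < e) :
    0 < ((e : ℝ) - b + 1) * ((e : ℝ) - b) / (((b : ℝ) - s + 1) * ((b : ℝ) - s)) := by
  have hsb' : (s : ℝ) + 1 ≤ b := by exact_mod_cast hsb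
  have hbe' : (b : ℝ) + 1 ≤ e := by exact_mod_cast hbe
  exact div_pos (by nlinarith) (by nlinarith)

lemma betaC_sq (hsb : s < b) (hbe : b < e) :
    betaC s b e ^ 2 = ((e : ℝ) - b + 1) * ((e : ℝ) - b) / (((b : ℝ) - s + 1) * ((b : ℝ) - s)) :=
  Real.sq_sqrt (betaC_radicand_pos hsb hbe).le

lemma betaC_pos (hsb : s < b) (hbe : b < e) : 0 < betaC s b e :=
  Real.sqrt_pos.mpr (betaC_radicand_pos hsb hbe)

lemma alphaC_radicand_pos (hsb : s < b) (hbe : b < e) :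
    0 < 6 / (((e : ℝ) - s + 1) * (((e : ℝ) - s + 1) ^ 2 - 1) *
      (1 + ((e : ℝ) - b + 1) * ((b : ℝ) - s + 1) + ((e : ℝ) - b) * ((b : ℝ) - s))) := by
  have hsb' : (s : ℝ) + 1 ≤ b := by exact_mod_cast hsb
  have hbe' : (b : ℝ) + 1 ≤ e := by exact_mod_cast hbe
  refine div_pos (by norm_num) (mul_pos (mul_pos ?_ ?_) ?_) <;> nlinarith

lemma alphaC_sq (hsb : s < b) (hbe : b < e) :
    alphaC s b e ^ 2 = 6 / (((e : ℝ) - s + 1) * (((e : ℝ) - s + 1) ^ 2 - 1) *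
      (1 + ((e : ℝ) - b + 1) * ((b : ℝ) - s + 1) + ((e : ℝ) - b) * ((b : ℝ) - s))) :=
  Real.sq_sqrt (alphaC_radicand_pos hsb hbe).le

lemma alphaC_pos (hsb : s < b) (hbe : b < e) : 0 < alphaC s b e :=
  Real.sqrt_pos.mpr (alphaC_radicand_pos hsb hbe)

-- Writing `alphaC_sq`, `betaC_sq` as `α² = 6 / D`, `β² = N / d`, this is `⟨ϕ, ϕ⟩ = 1`
-- multiplied by `D N d`.
lemma norm_identity_phiLeft_phiRight (hsb : s ≤ b) (hbe : b ≤ e) :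
    6 * ((((e : ℝ) - b + 1) * ((e : ℝ) - b)) ^ 2 *
        ∑ t ∈ Ico s (b + 1), phiLeft s b e t * phiLeft s b e t +
      (((b : ℝ) - s + 1) * ((b : ℝ) - s)) ^ 2 *
        ∑ t ∈ Ico (b + 1) (e + 1), phiRight s b e t * phiRight s b e t) =
      ((e : ℝ) - s + 1) * (((e : ℝ) - s + 1) ^ 2 - 1) *
        (1 + ((e : ℝ) - b + 1) * ((b : ℝ) - s + 1) + ((e : ℝ) - b) * ((b : ℝ) - s)) *
        ((((e : ℝ) - b + 1) * ((e : ℝ) - b)) * (((b : ℝ) - s + 1) * ((b : ℝ) - s))) := by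
  simp only [phiLeft, phiRight]
  rw [sum_Ico_affine_mul_affine _ _ _ _ (by omega), sum_Ico_affine_mul_affine _ _ _ _ (by omega)]
  simp only [affineProductPrimitive]
  push_cast
  ring

lemma innerT_phiC_self {T : ℕ} (hs : 1 ≤ s) (hsb : s < b) (hbe : b < e) (heT : e ≤ T) :
    innerT T (phiC s b e) (phiC s b e) = 1 := by
  rw [innerT_phiC _ hs hsb.le hbe.le heT]
  have hL : ∑ t ∈ Ico s (b + 1), phiC s b e t * phiLeft s b e t =
      alphaC s b e * betaC s b e * ∑ t ∈ Ico s (b + 1), phiLeft s b e t * phiLeft s b e t := by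
    rw [Finset.mul_sum]
    refine Finset.sum_congr rfl fun t ht => ?_
    simp only [Finset.mem_Ico] at ht
    rw [phiC_of_le_of_le ht.1 (by omega), mul_assoc]
  have hR : ∑ t ∈ Ico (b + 1) (e + 1), phiC s b e t * phiRight s b e t =
      -(alphaC s b e / betaC s b e) *
        ∑ t ∈ Ico (b + 1) (e + 1), phiRight s b e t * phiRight s b e t := by
    rw [Finset.mul_sum]
    refine Finset.sum_congr rfl fun t ht => ?_
    simp only [Finset.mem_Ico] at ht
    rw [phiC_of_lt_of_le (by omega) (by omega), mul_assoc]
  have key := norm_identity_phiLeft_phiRight hsb.le hbe.le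
  have hα := alphaC_sq hsb hbe
  have hβ := betaC_sq hsb hbe
  have hα0 := (alphaC_pos hsb hbe).ne'
  have hβ0 := (betaC_pos hsb hbe).ne'
  have hNd := div_ne_zero_iff.mp (hβ ▸ pow_ne_zero 2 hβ0)
  have hD := (div_ne_zero_iff.mp (hα ▸ pow_ne_zero 2 hα0)).2
  rw [hL, hR]
  generalize ∑ t ∈ Ico s (b + 1), phiLeft s b e t * phiLeft s b e t = SL at key
  generalize ∑ t ∈ Ico (b + 1) (e + 1), phiRight s b e t * phiRight s b e t = SR at key
  calc _ = alphaC s b e ^ 2 * (betaC s b e ^ 2 * SL + SR / betaC s b e ^ 2) := by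
        field_simp; ring
    _ = 1 := by
      rw [hα, hβ]
      generalize ((e : ℝ) - s + 1) * (((e : ℝ) - s + 1) ^ 2 - 1) *
          (1 + ((e : ℝ) - b + 1) * ((b : ℝ) - s + 1) + ((e : ℝ) - b) * ((b : ℝ) - s)) = D
        at hD key ⊢
      generalize ((e : ℝ) - b + 1) * ((e : ℝ) - b) = N at hNd key ⊢
      generalize ((b : ℝ) - s + 1) * ((b : ℝ) - s) = d at hNd key ⊢
      field_simp [hNd.1, hNd.2]
      linear_combination key

-- With `β² = N / d` as in `betaC_sq`, this is `⟨A + B t, ϕ⟩ = 0` with denominators cleared.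
lemma orthogonality_identity_phiLeft_phiRight (A B : ℝ) (hsb : s ≤ b) (hbe : b ≤ e) :
    ((e : ℝ) - b + 1) * ((e : ℝ) - b) * ∑ t ∈ Ico s (b + 1), (A + B * t) * phiLeft s b e t =
      ((b : ℝ) - s + 1) * ((b : ℝ) - s) *
        ∑ t ∈ Ico (b + 1) (e + 1), (A + B * t) * phiRight s b e t := by
  have haff : ∀ t : ℕ, A + B * (t : ℝ) = B * t - -A := fun t => by ring
  simp only [haff, phiLeft, phiRight]
  rw [sum_Ico_affine_mul_affine _ _ _ _ (by omega), sum_Ico_affine_mul_affine _ _ _ _ (by omega)]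
  simp only [affineProductPrimitive]
  push_cast
  ring

lemma innerT_affine_phiC {T : ℕ} (A B : ℝ) (hs : 1 ≤ s) (hsb : s < b) (hbe : b < e)
    (heT : e ≤ T) : innerT T (fun t => A + B * t) (phiC s b e) = 0 := by
  rw [innerT_phiC _ hs hsb.le hbe.le heT]
  have key := orthogonality_identity_phiLeft_phiRight A B hsb.le hbe.le
  have hβ := betaC_sq hsb hbe
  have hβ0 := (betaC_pos hsb hbe).ne'
  have hd := (div_ne_zero_iff.mp (hβ ▸ pow_ne_zero 2 hβ0)).2
  generalize ∑ t ∈ Ico s (b + 1), (A + B * t) * phiLeft s b e t = OL at key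
  generalize ∑ t ∈ Ico (b + 1) (e + 1), (A + B * t) * phiRight s b e t = OR at key
  have hbalance : betaC s b e ^ 2 * OL - OR = 0 := by
    rw [hβ, div_mul_eq_mul_div, key, mul_div_cancel_left₀ _ hd, sub_self]
  calc _ = alphaC s b e / betaC s b e * (betaC s b e ^ 2 * OL - OR) := by field_simp
    _ = 0 := by rw [hbalance, mul_zero]

lemma innerT_phiC_eq_of_eq_smul_add_affine {T : ℕ} {x y : ℕ → ℝ} {c A B : ℝ}
    (hs : 1 ≤ s) (hsb : s < b) (hbe : b < e) (heT : e ≤ T)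
    (hxy : ∀ t, s ≤ t → t ≤ e → x t = c * y t + (A + B * t)) :
    innerT T x (phiC s b e) = c * innerT T y (phiC s b e) := by
  have hsum : innerT T x (phiC s b e) =
      ∑ t ∈ Icc 1 T, (c * (y t * phiC s b e t) + (A + B * t) * phiC s b e t) := by
    refine Finset.sum_congr rfl fun t _ => ?_
    by_cases ht : s ≤ t ∧ t ≤ e
    · rw [hxy t ht.1 ht.2]; ring
    · rw [phiC_eq_zero hsb.le hbe.le (by omega)]; ring
  rw [hsum, Finset.sum_add_distrib, ← Finset.mul_sum, ← innerT, ← innerT,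
    innerT_affine_phiC A B hs hsb hbe heT, add_zero]

end Contrast

noncomputable def kinkContrastSq (u v : ℝ) : ℝ :=
  u * (u + 1) * (v * (v + 1)) * (2 + u + v + 2 * u * v) /
    (6 * ((u + v + 1) * ((u + v + 1) ^ 2 - 1)))

noncomputable def kinkCoeff (s r e : ℕ) : ℝ :=
  -(((r : ℝ) - s + 1) * ((r : ℝ) - s) * betaC s r e /
    (alphaC s r e * (((e : ℝ) - s + 1) * (((e : ℝ) - s + 1) ^ 2 - 1))))

section Kink

variable {s r e : ℕ}

lemma kinkCoeff_sq (hsr : s < r) (hre : r < e) :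
    kinkCoeff s r e ^ 2 = kinkContrastSq ((r : ℝ) - s) ((e : ℝ) - r) := by
  have hα := alphaC_sq hsr hre
  have hβ := betaC_sq hsr hre
  have hNd := div_ne_zero_iff.mp (hβ ▸ pow_ne_zero 2 (betaC_pos hsr hre).ne')
  have hMN₁ :=
    mul_ne_zero_iff.mp (div_ne_zero_iff.mp (hα ▸ pow_ne_zero 2 (alphaC_pos hsr hre).ne')).2
  rw [kinkCoeff, neg_sq, div_pow, mul_pow _ (betaC s r e), mul_pow (alphaC s r e), hα, hβ,
    kinkContrastSq]
  field_simp [hNd.1, hNd.2, hMN₁.1, hMN₁.2]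
  ring

lemma exists_kink_eq_kinkCoeff_mul_phiC_add_affine (hsr : s < r) (hre : r < e) :
    ∃ A B : ℝ, ∀ t, s ≤ t → t ≤ e →
      max ((t : ℝ) - r) 0 = kinkCoeff s r e * phiC s r e t + (A + B * t) := by
  have hβ := betaC_sq hsr hre
  have hβ0 := (betaC_pos hsr hre).ne'
  have hα0 := (alphaC_pos hsr hre).ne'
  have hNd := div_ne_zero_iff.mp (hβ ▸ pow_ne_zero 2 hβ0)
  have hM := (mul_ne_zero_iff.mp (div_ne_zero_iff.mp (alphaC_sq hsr hre ▸ pow_ne_zero 2 hα0)).2).1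
  rw [kinkCoeff]
  generalize hN : ((e : ℝ) - r + 1) * ((e : ℝ) - r) = N at hβ hNd
  generalize hd : ((r : ℝ) - s + 1) * ((r : ℝ) - s) = d at hβ hNd ⊢
  generalize hM' : ((e : ℝ) - s + 1) * (((e : ℝ) - s + 1) ^ 2 - 1) = M at hM ⊢
  refine ⟨-(N * ((r : ℝ) * e + r * s - 2 * (s : ℝ) ^ 2 + 2 * s) / M),
    N * ((e : ℝ) + 2 * r - 3 * s + 2) / M, fun t hst hte => ?_⟩
  rcases le_or_gt t r with htr | hrt
  · have hκ :
        -(d * betaC s r e / (alphaC s r e * M)) * (alphaC s r e * betaC s r e) = -(N / M) := by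
      rw [show -(d * betaC s r e / (alphaC s r e * M)) * (alphaC s r e * betaC s r e) =
        -(d * betaC s r e ^ 2 / M) by field_simp, hβ]
      field_simp [hNd.2]
    rw [max_eq_right (by simp [htr]), phiC_of_le_of_le hst htr, ← mul_assoc, hκ, phiLeft]
    field_simp
    ring
  · have hκ : -(d * betaC s r e / (alphaC s r e * M)) * -(alphaC s r e / betaC s r e) = d / M := by
      field_simp
    rw [max_eq_left (by simp [hrt.le]), phiC_of_lt_of_le hrt hte, ← mul_assoc, hκ, phiRight]
    field_simp
    subst hN hd hM'
    ring

end Kink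


section KinkContrast

variable {u v : ℝ}

lemma kinkContrastSq_comm (u v : ℝ) : kinkContrastSq u v = kinkContrastSq v u := by
  rw [kinkContrastSq, kinkContrastSq]; ring

lemma kinkContrastSq_denom_pos (hu : 0 ≤ u) (hv : 0 ≤ v) (huv : 0 < u + v) :
    0 < 6 * ((u + v + 1) * ((u + v + 1) ^ 2 - 1)) := by
  have : 0 < (u + v + 1) ^ 2 - 1 := by nlinarith
  positivity

lemma pow_three_div_le_kinkContrastSq (hu : 1 ≤ u) (huv : u ≤ v) :
    u ^ 3 / 24 ≤ kinkContrastSq u v := by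
  have hu0 : 0 ≤ u := by linarith
  have hv0 : 0 ≤ v := by linarith
  rw [kinkContrastSq,
    div_le_div_iff₀ (by norm_num) (kinkContrastSq_denom_pos hu0 hv0 (by linarith))]
  have h1 : u ^ 2 * (u + v + 1) ≤ (u + 1) * (2 + u + v + 2 * u * v) := by nlinarith
  have h2 : u * ((u + v) * (u + v + 2)) ≤ 4 * (u * (v * (v + 1))) := by
    nlinarith [mul_nonneg (mul_nonneg (sub_nonneg.mpr huv) (by linarith : 0 ≤ 3 * v + u + 2)) hu0]
  calc u ^ 3 * (6 * ((u + v + 1) * ((u + v + 1) ^ 2 - 1)))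
      = 6 * ((u ^ 2 * (u + v + 1)) * (u * ((u + v) * (u + v + 2)))) := by ring
    _ ≤ 6 * (((u + 1) * (2 + u + v + 2 * u * v)) * (4 * (u * (v * (v + 1))))) := by
        gcongr
    _ = _ := by ring

lemma kinkContrastSq_le (hu : 1 ≤ u) (huv : u ≤ v) : kinkContrastSq u v ≤ (u + 1) ^ 3 / 3 := by
  have hu0 : 0 ≤ u := by linarith
  have hv0 : 0 ≤ v := by linarith
  rw [kinkContrastSq,
    div_le_div_iff₀ (kinkContrastSq_denom_pos hu0 hv0 (by linarith)) (by norm_num)]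
  have h1 : 2 + u + v + 2 * u * v ≤ 2 * ((u + 1) * (u + v + 2)) := by nlinarith
  have h2 : u * (v * (v + 1)) ≤ (u + 1) * ((u + v) * (u + v + 1)) := by
    nlinarith [mul_nonneg (mul_nonneg hu0 hu0) hv0, mul_nonneg (mul_nonneg hu0 hu0) hu0,
      mul_nonneg (mul_nonneg hu0 hv0) hv0, mul_nonneg hu0 hv0]
  calc u * (u + 1) * (v * (v + 1)) * (2 + u + v + 2 * u * v) * 3
      = 3 * (u + 1) * ((2 + u + v + 2 * u * v) * (u * (v * (v + 1)))) := by ring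
    _ ≤ 3 * (u + 1) * ((2 * ((u + 1) * (u + v + 2))) * ((u + 1) * ((u + v) * (u + v + 1)))) := by
        gcongr
    _ = _ := by ring

lemma min_pow_three_div_le_kinkContrastSq (hu : 1 ≤ u) (hv : 1 ≤ v) :
    min u v ^ 3 / 24 ≤ kinkContrastSq u v := by
  rcases le_total u v with huv | hvu
  · rw [min_eq_left huv]; exact pow_three_div_le_kinkContrastSq hu huv
  · rw [min_eq_right hvu, kinkContrastSq_comm]; exact pow_three_div_le_kinkContrastSq hv hvu

lemma kinkContrastSq_le_min_add_one_pow_three_div (hu : 1 ≤ u) (hv : 1 ≤ v) :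
    kinkContrastSq u v ≤ (min u v + 1) ^ 3 / 3 := by
  rcases le_total u v with huv | hvu
  · rw [min_eq_left huv]; exact kinkContrastSq_le hu huv
  · rw [min_eq_right hvu, kinkContrastSq_comm]; exact kinkContrastSq_le hv hvu

end KinkContrast

lemma eq_affine_add_mul_kink {f : ℕ → ℝ} {s r e : ℕ} {a₁ b₁ a₂ b₂ : ℝ}
    (hcont : a₁ + b₁ * r = a₂ + b₂ * r)
    (hf₁ : ∀ t, s ≤ t → t ≤ r → f t = a₁ + b₁ * t)
    (hf₂ : ∀ t, r ≤ t → t ≤ e → f t = a₂ + b₂ * t) {t : ℕ} (hst : s ≤ t) (hte : t ≤ e) :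
    f t = a₁ + b₁ * t + (b₂ - b₁) * max ((t : ℝ) - r) 0 := by
  rcases le_or_gt t r with htr | hrt
  · rw [hf₁ t hst htr, max_eq_right (by simp [htr])]; ring
  · rw [hf₂ t hrt.le hte, max_eq_left (by simp [hrt.le])]; linear_combination -hcont

theorem statement11_general (T s r e : ℕ) (hs : 1 ≤ s) (hsr : s < r) (hre : r < e) (heT : e ≤ T)
    (f : ℕ → ℝ) (a₁ b₁ a₂ b₂ Δ : ℝ)
    (hcont : a₁ + b₁ * r = a₂ + b₂ * r)
    (hf₁ : ∀ t, s ≤ t → t ≤ r → f t = a₁ + b₁ * t)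
    (hf₂ : ∀ t, r ≤ t → t ≤ e → f t = a₂ + b₂ * t)
    (hΔ : Δ = |b₁ - b₂|) :
    (∀ b, s < b → b < e → contrastC T s b e f ≤ contrastC T s r e f) ∧
    (1 / Real.sqrt 24) * (min ((r : ℝ) - s) ((e : ℝ) - r)) ^ ((3 : ℝ) / 2) * Δ ≤
        contrastC T s r e f ∧
    contrastC T s r e f ≤
        (1 / Real.sqrt 3) * (min ((r : ℝ) - s) ((e : ℝ) - r) + 1) ^ ((3 : ℝ) / 2) * Δ := by
  obtain ⟨A, B, hkink⟩ := exists_kink_eq_kinkCoeff_mul_phiC_add_affine hsr hre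
  have hf : ∀ t, s ≤ t → t ≤ e → f t =
      (b₂ - b₁) * kinkCoeff s r e * phiC s r e t +
        (a₁ + (b₂ - b₁) * A + (b₁ + (b₂ - b₁) * B) * t) := by
    intro t hst hte
    rw [eq_affine_add_mul_kink hcont hf₁ hf₂ hst hte, hkink t hst hte]
    ring
  have hinner : ∀ b, s < b → b < e → innerT T f (phiC s b e) =
      (b₂ - b₁) * kinkCoeff s r e * innerT T (phiC s r e) (phiC s b e) :=
    fun b hsb hbe => innerT_phiC_eq_of_eq_smul_add_affine hs hsb hbe heT hf
  have hunit := innerT_phiC_self hs hsr hre heT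
  have hCr : contrastC T s r e f = Δ * √(kinkContrastSq ((r : ℝ) - s) ((e : ℝ) - r)) := by
    rw [contrastC, hinner r hsr hre, hunit, mul_one, abs_mul, ← kinkCoeff_sq hsr hre,
      Real.sqrt_sq_eq_abs, hΔ, abs_sub_comm]
  have hu : (1 : ℝ) ≤ r - s := by rw [le_sub_iff_add_le']; exact_mod_cast hsr
  have hv : (1 : ℝ) ≤ e - r := by rw [le_sub_iff_add_le']; exact_mod_cast hre
  have hΔ0 : 0 ≤ Δ := hΔ ▸ abs_nonneg _
  refine ⟨fun b hsb hbe => ?_, ?_, ?_⟩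
  · rw [contrastC, contrastC, hinner b hsb hbe, hinner r hsr hre, hunit, mul_one, abs_mul]
    exact mul_le_of_le_one_right (abs_nonneg _)
      (abs_innerT_le_one hunit (innerT_phiC_self hs hsb hbe heT))
  · rw [hCr, one_div_sqrt_mul_rpow_three_halves (by positivity), mul_comm _ Δ]
    exact mul_le_mul_of_nonneg_left
      (Real.sqrt_le_sqrt (min_pow_three_div_le_kinkContrastSq hu hv)) hΔ0
  · rw [hCr, one_div_sqrt_mul_rpow_three_halves (by positivity), mul_comm _ Δ]
    exact mul_le_mul_of_nonneg_left
      (Real.sqrt_le_sqrt (kinkContrastSq_le_min_add_one_pow_three_div hu hv)) hΔ0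

/-- for a continuous piecewise-linear signal with exactly one kink at `r` on
`[s, e]`, the contrast is maximized at `r` and is bounded between
`(1/√24)·η^{3/2}·Δ` and `(1/√3)·(η+1)^{3/2}·Δ`, where `η = min{r − s, e − r}`. -/
theorem statement11 (T s r e : ℕ) (hs : 1 ≤ s) (hsr : s < r) (hre : r < e) (heT : e ≤ T)
    (f : ℕ → ℝ) (a₁ b₁ a₂ b₂ Δ : ℝ) (hslope : b₁ ≠ b₂)
    (hcont : a₁ + b₁ * r = a₂ + b₂ * r)
    (hf₁ : ∀ t, s ≤ t → t ≤ r → f t = a₁ + b₁ * t)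
    (hf₂ : ∀ t, r ≤ t → t ≤ e → f t = a₂ + b₂ * t)
    (hΔ : Δ = |b₁ - b₂|) :
    (∀ b, s < b → b < e → contrastC T s b e f ≤ contrastC T s r e f) ∧
    (1 / Real.sqrt 24) * (min ((r : ℝ) - s) ((e : ℝ) - r)) ^ ((3 : ℝ) / 2) * Δ ≤
        contrastC T s r e f ∧
    contrastC T s r e f ≤
        (1 / Real.sqrt 3) * (min ((r : ℝ) - s) ((e : ℝ) - r) + 1) ^ ((3 : ℝ) / 2) * Δ :=
  statement11_general T s r e hs hsr hre heT f a₁ b₁ a₂ b₂ Δ hcont hf₁ hf₂ hΔ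
end

section
/- Let T ≥ 2 be an integer, let 1 ≤ s < r < e ≤ T be integers, and let f ∈ ℝ^T be continuous piecewise-linear on [s,e] with exactly one change-point (kink) at r, with kink magnitude Δ. Let n ≥ 3/2, δ > 0, f̲ > 0 and C* > 0 be reals with Δ ≥ f̲, δ^{3/2}·f̲ ≥ C*·√(log T), and min{r − s, e − r} ≥ δ/(2n). Let X ∈ ℝ^T satisfy |⟨X − f, ϕ^b_{s,e}⟩| ≤ √(8·log T) for every integer b with s < b < e. Then max over integers b with s < b < e of C^b_{s,e}(X) ≥ (1/(8·√(3n³)) − 2√2/C*)·δ^{3/2}·f̲. -/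
open Real Finset

/-!
At `b = r` an explicit summation gives `⟨f, ϕ^r_{s,e}⟩ = (b₁ - b₂) κ(r - s, e - r)`, where
`κ(k, m)² = (k+1)k(m+1)m(2km+k+m+2) / (6(k+m)(k+m+1)(k+m+2)) ≥ min(k, m)³ / 24`
(`κ` is `kinkContrast`).
Since `min(r - s, e - r) ≥ δ/(2n)`, the signal is at least `Δ δ^{3/2} / (8√(3n³))`. The noise at
`b = r` is at most `√(8 log T) ≤ 2√2 δ^{3/2} f̲ / C*` by the signal-to-noise assumption, and the
triangle inequality concludes.
-/

noncomputable def kinkContrast (k m : ℝ) : ℝ :=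
  √((k + 1) * k * ((m + 1) * m) * (2 * k * m + k + m + 2) /
    (6 * ((k + m) * (k + m + 1) * (k + m + 2))))

lemma kinkContrast_nonneg (k m : ℝ) : 0 ≤ kinkContrast k m := Real.sqrt_nonneg _

lemma kinkContrast_comm (k m : ℝ) : kinkContrast k m = kinkContrast m k := by
  unfold kinkContrast
  congr 1
  ring

lemma pow_three_mul_le_of_le {k m : ℝ} (hk : 0 ≤ k) (hkm : k ≤ m) :
    k ^ 3 * ((k + m) * (k + m + 1) * (k + m + 2)) ≤
      4 * ((k + 1) * k * ((m + 1) * m) * (2 * k * m + k + m + 2)) := by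
  have hm : 0 ≤ m := hk.trans hkm
  calc k ^ 3 * ((k + m) * (k + m + 1) * (k + m + 2))
      ≤ k ^ 3 * (2 * m * (2 * m + 1) * (2 * m + 2)) := by gcongr <;> linarith
    _ = 4 * ((m + 1) * m) * k * (k ^ 2 * (2 * m + 1)) := by ring
    _ ≤ 4 * ((m + 1) * m) * k * ((k + 1) * (2 * k * m + k + m + 2)) := by
        gcongr 4 * _ * _ * ?_
        nlinarith
    _ = 4 * ((k + 1) * k * ((m + 1) * m) * (2 * k * m + k + m + 2)) := by ring

lemma sqrt_min_pow_three_div_le_kinkContrast {k m : ℝ} (hk : 0 < k) (hm : 0 < m) :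
    √(min k m ^ 3 / 24) ≤ kinkContrast k m := by
  wlog hkm : k ≤ m generalizing k m
  · rw [min_comm, kinkContrast_comm]
    exact this hm hk (by linarith)
  rw [min_eq_left hkm]
  apply Real.sqrt_le_sqrt
  rw [div_le_div_iff₀ (by norm_num) (by positivity)]
  linarith [pow_three_mul_le_of_le hk.le hkm]

lemma rpow_three_halves_div_eq_sqrt {δ n : ℝ} (hδ : 0 ≤ δ) (hn : 0 < n) :
    δ ^ ((3 : ℝ) / 2) / (8 * √(3 * n ^ 3)) = √((δ / (2 * n)) ^ 3 / 24) := by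
  have hδ32 : δ ^ ((3 : ℝ) / 2) = √(δ ^ 3) := by
    rw [Real.sqrt_eq_rpow, ← Real.rpow_natCast, ← Real.rpow_mul hδ]
    norm_num
  have h8 : 8 * √(3 * n ^ 3) = √(192 * n ^ 3) := by
    rw [show (192 : ℝ) * n ^ 3 = 8 ^ 2 * (3 * n ^ 3) by ring,
      Real.sqrt_mul (by norm_num : (0 : ℝ) ≤ 8 ^ 2), Real.sqrt_sq (by norm_num)]
  rw [hδ32, h8, ← Real.sqrt_div' _ (by positivity)]
  congr 1
  field_simp
  ring

lemma rpow_three_halves_div_le_kinkContrast {δ n k m : ℝ} (hδ : 0 ≤ δ) (hn : 0 < n)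
    (hk : 0 < k) (hm : 0 < m) (hmin : δ / (2 * n) ≤ min k m) :
    δ ^ ((3 : ℝ) / 2) / (8 * √(3 * n ^ 3)) ≤ kinkContrast k m := by
  rw [rpow_three_halves_div_eq_sqrt hδ hn]
  refine le_trans (Real.sqrt_le_sqrt ?_) (sqrt_min_pow_three_div_le_kinkContrast hk hm)
  have : 0 ≤ δ / (2 * n) := by positivity
  gcongr

lemma innerT_sub_left (T : ℕ) (x y z : ℕ → ℝ) :
    innerT T (fun t => x t - y t) z = innerT T x z - innerT T y z := by
  simp only [innerT, sub_mul, Finset.sum_sub_distrib]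

lemma abs_innerT_le_contrastC_add (T s b e : ℕ) (f X : ℕ → ℝ) :
    |innerT T f (phiC s b e)| ≤
      contrastC T s b e X + |innerT T (fun t => X t - f t) (phiC s b e)| := by
  rw [contrastC, innerT_sub_left, abs_sub_comm]
  linarith [abs_sub_abs_le_abs_sub (innerT T f (phiC s b e)) (innerT T X (phiC s b e))]

lemma innerT_phiC_eq_sum {T s b e : ℕ} (x : ℕ → ℝ) (hs : 1 ≤ s) (hsb : s ≤ b) (hbe : b ≤ e)
    (heT : e ≤ T) :
    innerT T x (phiC s b e) =
      ∑ t ∈ Icc s b, x t * (alphaC s b e * betaC s b e *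
        (((e : ℝ) + 2 * b - 3 * s + 2) * t - ((b : ℝ) * e + (b : ℝ) * s - 2 * (s : ℝ) ^ 2 + 2 * s)))
      + ∑ t ∈ Icc (b + 1) e, x t * (-(alphaC s b e / betaC s b e) *
        ((3 * (e : ℝ) - 2 * b - s + 2) * t - (2 * (e : ℝ) ^ 2 + 2 * e - (b : ℝ) * e - (b : ℝ) * s))) := by
  have hsupp : innerT T x (phiC s b e) = ∑ t ∈ Icc s e, x t * phiC s b e t := by
    refine (Finset.sum_subset (fun t ht => ?_) fun t _ ht => ?_).symm
    · simp only [Finset.mem_Icc] at ht ⊢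
      omega
    · simp only [Finset.mem_Icc, not_and, not_le] at ht
      rw [phiC, if_neg (by omega), if_neg (by omega), mul_zero]
  rw [hsupp, ← Finset.Ico_add_one_right_eq_Icc s e,
    ← Finset.sum_Ico_consecutive _ (show s ≤ b + 1 by omega) (show b + 1 ≤ e + 1 by omega),
    Finset.Ico_add_one_right_eq_Icc, Finset.Ico_add_one_right_eq_Icc]
  congr 1 <;> refine Finset.sum_congr rfl fun t ht => ?_ <;> rw [Finset.mem_Icc] at ht
  · rw [phiC, if_pos ht]
  · rw [phiC, if_neg (by omega), if_pos ht]

lemma sum_range_quadratic (c₂ c₁ c₀ : ℝ) (N : ℕ) :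
    ∑ t ∈ range N, (c₂ * (t : ℝ) ^ 2 + c₁ * t + c₀) =
      c₂ * ((N : ℝ) * (N - 1) * (2 * N - 1) / 6) + c₁ * ((N : ℝ) * (N - 1) / 2) + c₀ * N := by
  induction N with
  | zero => simp
  | succ N ih =>
    rw [Finset.sum_range_succ, ih]
    push_cast
    ring

lemma sum_Icc_affine_mul_affine {a b : ℕ} (hab : a ≤ b) (u v G p q : ℝ) :
    ∑ t ∈ Icc a b, (u + v * (t : ℝ)) * (G * (p * t - q)) =
      G * v * p * (((b : ℝ) + 1) * b * (2 * b + 1) / 6 - (a : ℝ) * (a - 1) * (2 * a - 1) / 6)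
        + G * (u * p - v * q) * (((b : ℝ) + 1) * b / 2 - (a : ℝ) * (a - 1) / 2)
        - G * u * q * ((b : ℝ) - a + 1) := by
  have hrange (N : ℕ) := sum_range_quadratic (G * v * p) (G * (u * p - v * q)) (-(G * u * q)) N
  rw [← Finset.Ico_add_one_right_eq_Icc, Finset.sum_Ico_eq_sub _ (by omega : a ≤ b + 1)]
  simp only [show ∀ t : ℕ, (u + v * (t : ℝ)) * (G * (p * t - q)) =
    G * v * p * (t : ℝ) ^ 2 + G * (u * p - v * q) * t + -(G * u * q) from fun t => by ring]
  rw [hrange, hrange]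
  push_cast
  ring

lemma alphaC_div_betaC_mul_eq_kinkContrast {s b e : ℕ} (hsb : s < b) (hbe : b < e) :
    alphaC s b e / betaC s b e *
        (((e : ℝ) - b + 1) * (e - b) * (2 * ((b : ℝ) - s) * (e - b) + (b - s) + (e - b) + 2) / 6) =
      kinkContrast (b - s) (e - b) := by
  have hk : (0 : ℝ) < b - s := sub_pos.2 (by exact_mod_cast hsb)
  have hm : (0 : ℝ) < e - b := sub_pos.2 (by exact_mod_cast hbe)
  rw [alphaC, betaC, ← Real.sqrt_div' _ (by positivity),
    ← Real.sqrt_sq (by positivity : (0 : ℝ) ≤ ((e : ℝ) - b + 1) * (e - b) *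
      (2 * ((b : ℝ) - s) * (e - b) + (b - s) + (e - b) + 2) / 6),
    ← Real.sqrt_mul' _ (sq_nonneg _), kinkContrast]
  congr 1
  have hℓ : (e : ℝ) - s + 1 ≠ 0 := by linarith
  have hℓ_sq : ((e : ℝ) - s + 1) ^ 2 - 1 ≠ 0 := by nlinarith
  field_simp
  ring

lemma innerT_kink_phiC {T s r e : ℕ} (hs : 1 ≤ s) (hsr : s < r) (hre : r < e) (heT : e ≤ T)
    {f : ℕ → ℝ} {a₁ b₁ a₂ b₂ : ℝ} (hcont : a₁ + b₁ * r = a₂ + b₂ * r)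
    (hf₁ : ∀ t, s ≤ t → t ≤ r → f t = a₁ + b₁ * t)
    (hf₂ : ∀ t, r ≤ t → t ≤ e → f t = a₂ + b₂ * t) :
    innerT T f (phiC s r e) = (b₁ - b₂) * kinkContrast (r - s) (e - r) := by
  have hk : (0 : ℝ) < r - s := sub_pos.2 (by exact_mod_cast hsr)
  have hm : (0 : ℝ) < e - r := sub_pos.2 (by exact_mod_cast hre)
  have hβ : betaC s r e ≠ 0 := by
    rw [betaC]
    apply (Real.sqrt_pos.mpr _).ne'
    apply div_pos <;> apply mul_pos <;> linarith
  have hβ_sq : betaC s r e ^ 2 = ((e : ℝ) - r + 1) * (e - r) / ((r - s + 1) * (r - s)) := by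
    rw [betaC, Real.sq_sqrt]
    apply div_nonneg <;> apply mul_nonneg <;> linarith
  have hαβ : alphaC s r e * betaC s r e = alphaC s r e / betaC s r e * betaC s r e ^ 2 := by
    field_simp
  rw [innerT_phiC_eq_sum f hs hsr.le hre.le heT, ← alphaC_div_betaC_mul_eq_kinkContrast hsr hre,
    Finset.sum_congr rfl fun t ht => by rw [hf₁ t (Finset.mem_Icc.1 ht).1 (Finset.mem_Icc.1 ht).2],
    Finset.sum_congr (rfl : Icc (r + 1) e = _) fun t ht => by
      rw [hf₂ t (by linarith [(Finset.mem_Icc.1 ht).1]) (Finset.mem_Icc.1 ht).2],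
    sum_Icc_affine_mul_affine hsr.le, sum_Icc_affine_mul_affine (by omega : r + 1 ≤ e), hαβ, hβ_sq]
  have h1 : (r : ℝ) - s + 1 ≠ 0 := by linarith
  have h2 : (r : ℝ) - s ≠ 0 := by linarith
  obtain rfl : a₂ = a₁ + b₁ * r - b₂ * r := by linear_combination -hcont
  generalize alphaC s r e / betaC s r e = c
  push_cast
  field_simp
  ring

lemma sqrt_eight_mul_le_s13 {C L S : ℝ} (hC : 0 < C) (hCS : C * √L ≤ S) :
    √(8 * L) ≤ 2 * √2 / C * S := by
  have hsqrt8 : √8 = 2 * √2 := by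
    rw [show (8 : ℝ) = 2 ^ 2 * 2 by norm_num, Real.sqrt_mul (by positivity),
      Real.sqrt_sq (by norm_num)]
  calc √(8 * L) = 2 * √2 * √L := by rw [Real.sqrt_mul (by norm_num), hsqrt8]
    _ ≤ 2 * √2 * (S / C) := by
        gcongr
        rwa [le_div_iff₀ hC, mul_comm]
    _ = 2 * √2 / C * S := by ring

theorem statement13_general (T s r e : ℕ) (hs : 1 ≤ s) (hsr : s < r) (hre : r < e)
    (heT : e ≤ T) (f : ℕ → ℝ) (a₁ b₁ a₂ b₂ Δ : ℝ)
    (hcont : a₁ + b₁ * r = a₂ + b₂ * r)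
    (hf₁ : ∀ t, s ≤ t → t ≤ r → f t = a₁ + b₁ * t)
    (hf₂ : ∀ t, r ≤ t → t ≤ e → f t = a₂ + b₂ * t)
    (hΔ : Δ = |b₁ - b₂|)
    (n δ flow Cstar : ℝ) (hn : (3 : ℝ) / 2 ≤ n) (hδ : 0 < δ)
    (hCstar : 0 < Cstar) (hΔflow : flow ≤ Δ)
    (hSNR : Cstar * Real.sqrt (Real.log T) ≤ δ ^ ((3 : ℝ) / 2) * flow)
    (hmin : δ / (2 * n) ≤ min ((r : ℝ) - s) ((e : ℝ) - r))
    (X : ℕ → ℝ)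
    (hX : ∀ b, s < b → b < e →
      |innerT T (fun t => X t - f t) (phiC s b e)| ≤ Real.sqrt (8 * Real.log T)) :
    ∃ b, s < b ∧ b < e ∧
      (1 / (8 * Real.sqrt (3 * n ^ 3)) - 2 * Real.sqrt 2 / Cstar) * δ ^ ((3 : ℝ) / 2) * flow ≤
        contrastC T s b e X := by
  have hk : (0 : ℝ) < r - s := sub_pos.2 (by exact_mod_cast hsr)
  have hm : (0 : ℝ) < e - r := sub_pos.2 (by exact_mod_cast hre)
  have hsignal : δ ^ ((3 : ℝ) / 2) * flow / (8 * √(3 * n ^ 3)) ≤ |innerT T f (phiC s r e)| :=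
    calc δ ^ ((3 : ℝ) / 2) * flow / (8 * √(3 * n ^ 3))
        ≤ Δ * (δ ^ ((3 : ℝ) / 2) / (8 * √(3 * n ^ 3))) := by
          rw [mul_comm Δ, mul_div_right_comm]
          gcongr
      _ ≤ Δ * kinkContrast (r - s) (e - r) := by
          gcongr
          · exact hΔ ▸ abs_nonneg _
          · exact rpow_three_halves_div_le_kinkContrast hδ.le (by linarith) hk hm hmin
      _ = |innerT T f (phiC s r e)| := by
          rw [innerT_kink_phiC hs hsr hre heT hcont hf₁ hf₂, abs_mul, ← hΔ,
            abs_of_nonneg (kinkContrast_nonneg _ _)]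
  have hnoise := sqrt_eight_mul_le_s13 hCstar hSNR
  have htriangle := abs_innerT_le_contrastC_add T s r e f X
  refine ⟨r, hsr, hre, ?_⟩
  calc (1 / (8 * √(3 * n ^ 3)) - 2 * √2 / Cstar) * δ ^ ((3 : ℝ) / 2) * flow
      = δ ^ ((3 : ℝ) / 2) * flow / (8 * √(3 * n ^ 3)) -
          2 * √2 / Cstar * (δ ^ ((3 : ℝ) / 2) * flow) := by ring
    _ ≤ contrastC T s r e X := by linarith [hX r hsr hre]

/-- lower bound on the maximal contrast value of the observed data over
`[s, e]`, when the interval contains a single kink whose distance to both end-points is at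
least `δ/(2n)`. -/
theorem statement13 (T s r e : ℕ) (hT : 2 ≤ T) (hs : 1 ≤ s) (hsr : s < r) (hre : r < e)
    (heT : e ≤ T) (f : ℕ → ℝ) (a₁ b₁ a₂ b₂ Δ : ℝ) (hslope : b₁ ≠ b₂)
    (hcont : a₁ + b₁ * r = a₂ + b₂ * r)
    (hf₁ : ∀ t, s ≤ t → t ≤ r → f t = a₁ + b₁ * t)
    (hf₂ : ∀ t, r ≤ t → t ≤ e → f t = a₂ + b₂ * t)
    (hΔ : Δ = |b₁ - b₂|)
    (n δ flow Cstar : ℝ) (hn : (3 : ℝ) / 2 ≤ n) (hδ : 0 < δ) (hflow : 0 < flow)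
    (hCstar : 0 < Cstar) (hΔflow : flow ≤ Δ)
    (hSNR : Cstar * Real.sqrt (Real.log T) ≤ δ ^ ((3 : ℝ) / 2) * flow)
    (hmin : δ / (2 * n) ≤ min ((r : ℝ) - s) ((e : ℝ) - r))
    (X : ℕ → ℝ)
    (hX : ∀ b, s < b → b < e →
      |innerT T (fun t => X t - f t) (phiC s b e)| ≤ Real.sqrt (8 * Real.log T)) :
    ∃ b, s < b ∧ b < e ∧
      (1 / (8 * Real.sqrt (3 * n ^ 3)) - 2 * Real.sqrt 2 / Cstar) * δ ^ ((3 : ℝ) / 2) * flow ≤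
        contrastC T s b e X :=
  statement13_general T s r e hs hsr hre heT f a₁ b₁ a₂ b₂ Δ hcont hf₁ hf₂ hΔ n δ flow Cstar hn hδ
    hCstar hΔflow hSNR hmin X hX
end
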